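/- For every x = (x₁,x₂,x₃,x₄,x₅,x₆) ∈ [1,∞)⁶ with x₁ > 1, at least one of the following two alternatives holds: (i) ∂φ/∂x₂(x) > 0 and ∂φ/∂x₅(x) > 0; (ii) ∂φ/∂x₃(x) > 0 and ∂φ/∂x₆(x) > 0. -/

import Mathlib

/-! In each of `x₂, x₃, x₅, x₆`, φ is a linear function divided by the square root of a monic
quadratic, so the sign of the partial derivative is that of a polynomial. For `∂₂` this
polynomial is `2 (x₁² - 1)` times an expression that is positive once `x₃x₆ ≤ x₂x₅`. The
symmetries of φ fixing the edge `e₁` carry `∂₅` to `∂₂` under the same condition, and `∂₃, ∂₆`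
to `∂₂` under the reverse one; one of the two conditions always holds. -/

open Real

/-- The cosine of the dihedral angle at the edge `e₁` of a generalized hyper-ideal
tetrahedron whose edge lengths `lᵢ` satisfy `cosh lᵢ = xᵢ`. -/
noncomputable def phi (x1 x2 x3 x4 x5 x6 : ℝ) : ℝ :=
  (x2 * x3 + x5 * x6 + x1 * x2 * x5 + x1 * x3 * x6 - x1 ^ 2 * x4 + x4) /
    (Real.sqrt (2 * x1 * x2 * x6 + x1 ^ 2 + x2 ^ 2 + x6 ^ 2 - 1) *
      Real.sqrt (2 * x1 * x3 * x5 + x1 ^ 2 + x3 ^ 2 + x5 ^ 2 - 1))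

lemma deriv_div_sqrt_mul_pos {f Q : ℝ → ℝ} {f' Q' c x : ℝ} (hf : HasDerivAt f f' x)
    (hQ : HasDerivAt Q Q' x) (hQx : 0 < Q x) (hc : 0 < c)
    (hsign : 0 < 2 * f' * Q x - f x * Q') :
    0 < deriv (fun t => f t / (√(Q t) * c)) x := by
  have hsqrt : 0 < √(Q x) := Real.sqrt_pos.2 hQx
  rw [((hf.fun_div ((hQ.sqrt hQx.ne').mul_const c) (by positivity))).deriv]
  have hnum : f' * (√(Q x) * c) - f x * (Q' / (2 * √(Q x)) * c)
      = (2 * f' * Q x - f x * Q') * c / (2 * √(Q x)) := by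
    field_simp
    rw [Real.sq_sqrt hQx.le]
    ring
  rw [hnum]
  positivity

lemma phi_swap_23_56 (x1 x2 x3 x4 x5 x6 : ℝ) :
    phi x1 x2 x3 x4 x5 x6 = phi x1 x3 x2 x4 x6 x5 := by
  unfold phi; ring_nf

lemma phi_swap_25_36 (x1 x2 x3 x4 x5 x6 : ℝ) :
    phi x1 x2 x3 x4 x5 x6 = phi x1 x5 x6 x4 x2 x3 := by
  unfold phi; ring_nf

lemma phi_radicand_pos {x1 a b : ℝ} (h1 : 1 < x1) (ha : 0 < a) (hb : 0 < b) :
    0 < 2 * x1 * a * b + x1 ^ 2 + a ^ 2 + b ^ 2 - 1 := by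
  nlinarith [mul_pos (mul_pos (zero_lt_one.trans h1) ha) hb]

lemma deriv_phi_snd_pos {x1 x2 x3 x4 x5 x6 : ℝ} (h1 : 1 < x1) (h2 : 1 ≤ x2) (h3 : 1 ≤ x3)
    (h4 : 1 ≤ x4) (h5 : 1 ≤ x5) (h6 : 1 ≤ x6) (h : x3 * x6 ≤ x2 * x5) :
    0 < deriv (fun t => phi x1 t x3 x4 x5 x6) x2 := by
  set a := x3 + x1 * x5
  set b := x5 * x6 + x1 * x3 * x6 - x1 ^ 2 * x4 + x4
  set Q := fun t => t ^ 2 + 2 * x1 * x6 * t + (x1 ^ 2 + x6 ^ 2 - 1)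
  have hphi : (fun t => phi x1 t x3 x4 x5 x6) = fun t =>
      (a * t + b) / (√(Q t) * √(2 * x1 * x3 * x5 + x1 ^ 2 + x3 ^ 2 + x5 ^ 2 - 1)) := by
    funext t; simp only [a, b, Q]; unfold phi; ring_nf
  have hf : HasDerivAt (fun t => a * t + b) a x2 := by
    simpa using ((hasDerivAt_id x2).const_mul a).add_const b
  have hQ : HasDerivAt Q (2 * x2 + 2 * x1 * x6) x2 := by
    simpa [Q] using ((hasDerivAt_pow 2 x2).add
      ((hasDerivAt_id x2).const_mul (2 * x1 * x6))).add_const (x1 ^ 2 + x6 ^ 2 - 1)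
  have hsign_eq : 2 * a * Q x2 - (a * x2 + b) * (2 * x2 + 2 * x1 * x6) = 2 * (x1 ^ 2 - 1) *
      ((x4 - 1) * (x1 * x6 + x2) + x2 + x1 * x5 + x1 * x6 + x3 + x6 * (x2 * x5 - x3 * x6)) := by
    ring
  rw [hphi]
  refine deriv_div_sqrt_mul_pos hf hQ ?_ ?_ (hsign_eq ▸ ?_)
  · have := phi_radicand_pos h1 (by linarith : (0 : ℝ) < x2) (by linarith : (0 : ℝ) < x6)
    simp only [Q]
    linarith
  · exact Real.sqrt_pos.2 (phi_radicand_pos h1 (by linarith) (by linarith))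
  · have hx4_term : 0 ≤ (x4 - 1) * (x1 * x6 + x2) := mul_nonneg (by linarith) (by positivity)
    have hx6_term : 0 ≤ x6 * (x2 * x5 - x3 * x6) := mul_nonneg (by linarith) (by linarith)
    have hx1_sq : 0 < x1 ^ 2 - 1 := by nlinarith
    positivity

theorem phi_partial_positivity (x1 x2 x3 x4 x5 x6 : ℝ)
    (h2 : 1 ≤ x2) (h3 : 1 ≤ x3) (h4 : 1 ≤ x4) (h5 : 1 ≤ x5) (h6 : 1 ≤ x6)
    (h1' : 1 < x1) :
    (0 < deriv (fun t => phi x1 t x3 x4 x5 x6) x2 ∧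
        0 < deriv (fun t => phi x1 x2 x3 x4 t x6) x5) ∨
      (0 < deriv (fun t => phi x1 x2 t x4 x5 x6) x3 ∧
        0 < deriv (fun t => phi x1 x2 x3 x4 x5 t) x6) := by
  have hphi5 : (fun t => phi x1 x2 x3 x4 t x6) = fun t => phi x1 t x6 x4 x2 x3 :=
    funext fun t => phi_swap_25_36 x1 x2 x3 x4 t x6
  have hphi3 : (fun t => phi x1 x2 t x4 x5 x6) = fun t => phi x1 t x2 x4 x6 x5 :=
    funext fun t => phi_swap_23_56 x1 x2 t x4 x5 x6
  have hphi6 : (fun t => phi x1 x2 x3 x4 x5 t) = fun t => phi x1 t x5 x4 x3 x2 :=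
    funext fun t => (phi_swap_25_36 x1 x2 x3 x4 x5 t).trans (phi_swap_23_56 x1 x5 t x4 x2 x3)
  rcases le_total (x3 * x6) (x2 * x5) with h | h
  · refine Or.inl ⟨deriv_phi_snd_pos h1' h2 h3 h4 h5 h6 h, ?_⟩
    rw [hphi5]
    exact deriv_phi_snd_pos h1' h5 h6 h4 h2 h3 (by linarith)
  · refine Or.inr ⟨?_, ?_⟩
    · rw [hphi3]
      exact deriv_phi_snd_pos h1' h3 h2 h4 h6 h5 (by linarith)
    · rw [hphi6]
      exact deriv_phi_snd_pos h1' h6 h5 h4 h3 h2 (by linarith)
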